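/- For m ∈ ℕ⁺ set θ_m = π/2^m, R_m = 1 − 2^{−(m+1)}, z_m = e^{iθ_m}, and A_m = { r e^{iθ} : r ∈ (R_m, 1], θ ∈ (θ_{m+1}, θ_m) }. Then A_m ⊂ ℍ and for every ω ∈ A_m one has h_ℍ(ω, z_m) ≤ (√2/2)·π. -/

import Mathlib

open Complex Metric Set Real

/-- The hyperbolic (Poincaré) distance of the upper half-plane `ℍ = {z : Im z > 0}`,
given by the length metric with density `|dz| / Im z`. -/
noncomputable def hUHP (z w : ℂ) : ℝ :=
  2 * Real.arsinh (‖z - w‖ / (2 * Real.sqrt (z.im * w.im)))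

/-- `θ_m = π / 2^m`. -/
noncomputable def θm (m : ℕ) : ℝ := π / 2 ^ m

/-- `R_m = 1 - 2^{-(m+1)}`. -/
noncomputable def Rm (m : ℕ) : ℝ := 1 - 1 / 2 ^ (m + 1)

/-- `z_m = e^{iθ_m}`. -/
noncomputable def zm (m : ℕ) : ℂ := Complex.exp (θm m * Complex.I)

/-- `A_m = { r e^{iθ} : r ∈ (R_m, 1], θ ∈ (θ_{m+1}, θ_m) }`. -/
noncomputable def Am (m : ℕ) : Set ℂ :=
  {z : ℂ | ∃ r θ : ℝ, r ∈ Set.Ioc (Rm m) 1 ∧ θ ∈ Set.Ioo (θm (m + 1)) (θm m) ∧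
    z = r * Complex.exp (θ * Complex.I)}

/-!
Write `t = 2^{-m}` and `ω = r e^{iθ}` with `1 - t/2 < r ≤ 1` and `πt/2 < θ < πt`. Then
`‖ω - z_m‖ ≤ |r - 1| + |θ - πt| ≤ (1 + π) t / 2`, while Jordan's inequality gives
`Im ω ≥ 3t/4` and `Im z_m ≥ 2t`. As `arsinh x ≤ x`, the distance is at most
`‖ω - z_m‖ / √(Im ω · Im z_m) ≤ (1 + π) / √6`, which is below `√2 π / 2`.
-/

lemma arsinh_le_self {x : ℝ} (hx : 0 ≤ x) : arsinh x ≤ x := by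
  rw [← sinh_le_sinh, sinh_arsinh]
  exact self_le_sinh_iff.mpr hx

lemma hUHP_le_norm_sub_div_sqrt (z w : ℂ) : hUHP z w ≤ ‖z - w‖ / √(z.im * w.im) := by
  calc hUHP z w ≤ 2 * (‖z - w‖ / (2 * √(z.im * w.im))) :=
        mul_le_mul_of_nonneg_left (arsinh_le_self (by positivity)) zero_le_two
    _ = ‖z - w‖ / √(z.im * w.im) := by rw [mul_div_assoc', mul_div_mul_left _ _ two_ne_zero]

lemma div_sqrt_le_of_sq_le_mul {a b c : ℝ} (hb : 0 < b) (hc : 0 ≤ c) (h : a ^ 2 ≤ c ^ 2 * b) :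
    a / √b ≤ c := by
  rw [div_le_iff₀ (sqrt_pos.2 hb), ← sqrt_sq hc, ← sqrt_mul (sq_nonneg c)]
  exact le_sqrt_of_sq_le h

lemma norm_exp_ofReal_mul_I_sub_exp_ofReal_mul_I_le (a b : ℝ) :
    ‖exp (a * I) - exp (b * I)‖ ≤ |a - b| := by
  have h : exp (a * I) - exp (b * I) = exp (b * I) * (exp (I * (a - b : ℝ)) - 1) := by
    rw [mul_sub, ← Complex.exp_add]; push_cast; ring_nf
  rw [h, norm_mul, norm_exp_ofReal_mul_I, one_mul, ← Real.norm_eq_abs]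
  exact Real.norm_exp_I_mul_ofReal_sub_one_le

lemma norm_ofReal_mul_exp_sub_exp_le (r θ φ : ℝ) :
    ‖r * exp (θ * I) - exp (φ * I)‖ ≤ |r - 1| + |θ - φ| := by
  calc ‖r * exp (θ * I) - exp (φ * I)‖
      = ‖((r - 1 : ℝ) : ℂ) * exp (θ * I) + (exp (θ * I) - exp (φ * I))‖ := by
        push_cast; ring_nf
    _ ≤ |r - 1| + |θ - φ| := by
        refine (norm_add_le _ _).trans (add_le_add ?_ ?_)
        · rw [norm_mul, norm_exp_ofReal_mul_I, mul_one, Complex.norm_real, Real.norm_eq_abs]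
        · exact norm_exp_ofReal_mul_I_sub_exp_ofReal_mul_I_le θ φ

lemma im_ofReal_mul_exp_ofReal_mul_I (r θ : ℝ) : (r * exp (θ * I)).im = r * Real.sin θ := by
  simp only [mul_im, ofReal_re, ofReal_im, exp_ofReal_mul_I_im, zero_mul, add_zero]

lemma im_ofReal_mul_exp_ofReal_mul_I_pos {r θ : ℝ} (hr : 0 < r) (hθ₀ : 0 < θ) (hθπ : θ < π) :
    0 < (r * exp (θ * I)).im := by
  rw [im_ofReal_mul_exp_ofReal_mul_I]
  exact mul_pos hr (sin_pos_of_pos_of_lt_pi hθ₀ hθπ)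

lemma norm_ofReal_mul_exp_sub_exp_pi_mul_le {t r θ : ℝ} (hr : r ∈ Ioc (1 - t / 2) 1)
    (hθ : θ ∈ Ioo (π * t / 2) (π * t)) :
    ‖r * exp (θ * I) - exp ((π * t : ℝ) * I)‖ ≤ (1 + π) * t / 2 := by
  refine (norm_ofReal_mul_exp_sub_exp_le r θ (π * t)).trans ?_
  rw [abs_of_nonpos (by linarith [hr.2]), abs_of_neg (by linarith [hθ.2])]
  linarith [hr.1, hθ.1]

lemma three_div_two_mul_sq_le_im_mul_im {t r θ : ℝ} (ht₀ : 0 < t) (ht : t ≤ 1 / 2)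
    (hr : r ∈ Ioc (1 - t / 2) 1) (hθ : θ ∈ Ioo (π * t / 2) (π * t)) :
    3 / 2 * t ^ 2 ≤ (r * exp (θ * I)).im * (exp ((π * t : ℝ) * I)).im := by
  obtain ⟨hr₀, -⟩ := hr
  obtain ⟨hθ₀, hθ₁⟩ := hθ
  have hπt : π * t ≤ π / 2 := by nlinarith [pi_pos]
  have hsinθ : t ≤ Real.sin θ := by
    have := mul_le_sin (hθ₀.le.trans' (by positivity)) (hθ₁.le.trans hπt)
    rw [div_mul_eq_mul_div, div_le_iff₀ pi_pos] at this
    nlinarith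
  have hsinπt : 2 * t ≤ Real.sin (π * t) := by
    have := mul_le_sin (by positivity) hπt
    rwa [← mul_assoc, div_mul_cancel₀ _ pi_ne_zero] at this
  rw [im_ofReal_mul_exp_ofReal_mul_I, exp_ofReal_mul_I_im]
  have : 3 / 4 * t ≤ r * Real.sin θ := by nlinarith
  nlinarith

lemma hUHP_ofReal_mul_exp_le {t r θ : ℝ} (ht₀ : 0 < t) (ht : t ≤ 1 / 2)
    (hr : r ∈ Ioc (1 - t / 2) 1) (hθ : θ ∈ Ioo (π * t / 2) (π * t)) :
    hUHP (r * exp (θ * I)) (exp ((π * t : ℝ) * I)) ≤ √2 / 2 * π := by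
  have him := three_div_two_mul_sq_le_im_mul_im ht₀ ht hr hθ
  refine (hUHP_le_norm_sub_div_sqrt _ _).trans <|
    div_sqrt_le_of_sq_le_mul (him.trans_lt' (by positivity)) (by positivity) ?_
  calc ‖r * exp (θ * I) - exp ((π * t : ℝ) * I)‖ ^ 2
      ≤ ((1 + π) * t / 2) ^ 2 :=
        pow_le_pow_left₀ (norm_nonneg _) (norm_ofReal_mul_exp_sub_exp_pi_mul_le hr hθ) 2
    _ = (1 + π) ^ 2 / 4 * t ^ 2 := by ring
    _ ≤ 3 * π ^ 2 / 4 * t ^ 2 := by gcongr; nlinarith [pi_gt_three]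
    _ = (√2 / 2 * π) ^ 2 * (3 / 2 * t ^ 2) := by
        rw [mul_pow, div_pow, sq_sqrt zero_le_two]; ring
    _ ≤ (√2 / 2 * π) ^ 2 * ((r * exp (θ * I)).im * (exp ((π * t : ℝ) * I)).im) := by gcongr

lemma θm_eq (m : ℕ) : θm m = π * (1 / 2 ^ m) := by
  rw [θm, mul_one_div]

lemma θm_succ (m : ℕ) : θm (m + 1) = π * (1 / 2 ^ m) / 2 := by
  rw [θm, pow_succ]; ring

lemma Rm_eq (m : ℕ) : Rm m = 1 - 1 / 2 ^ m / 2 := by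
  rw [Rm, pow_succ]; ring

/-- `A_m ⊂ ℍ` and every `ω ∈ A_m` satisfies `h_ℍ(ω, z_m) ≤ (√2/2)·π`. -/
theorem hyperbolic_distance_to_zm_bounded (m : ℕ) (hm : 0 < m) :
    (∀ ω ∈ Am m, 0 < ω.im) ∧
    ∀ ω ∈ Am m, hUHP ω (zm m) ≤ (Real.sqrt 2 / 2) * π := by
  have ht₀ : 0 < (1 / 2 ^ m : ℝ) := by positivity
  have ht : (1 / 2 ^ m : ℝ) ≤ 1 / 2 :=
    one_div_le_one_div_of_le two_pos (le_self_pow₀ one_le_two hm.ne')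
  refine ⟨?_, ?_⟩ <;> rintro _ ⟨r, θ, hr, hθ, rfl⟩ <;>
    rw [Rm_eq] at hr <;> rw [θm_succ, θm_eq] at hθ
  · exact im_ofReal_mul_exp_ofReal_mul_I_pos (by linarith [hr.1])
      (hθ.1.trans' (by positivity)) (hθ.2.trans (by nlinarith [pi_pos]))
  · rw [zm, θm_eq]
    exact hUHP_ofReal_mul_exp_le ht₀ ht hr hθ
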